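/- The direct limit of the direct system of groups H_k = C_{p_k} ≀ ⋯ ≀ C_{p_1} (iterated wreath products of cyclic groups) under the natural injective homomorphisms H_k → H_{k+1} has commutator width 1. -/

import Mathlib

/-!
An element `(f, t)` of the commutator subgroup of `B ≀ C_p` has `t = 1` and `∏ᵢ f i ∈ [B, B]`
(read in `B^ab`), so the ordered product `f (p-1) ⋯ f 0` is a commutator `⁅s, u⁆` as soon as
`B` has commutator width at most one. Putting `a i = f i ⋯ f 0 · u`, a direct computation gives
`(f, 1) = ⁅(a, 1), (δ₀ s⁻¹, σ)⁆` with `σ` the generator of `C_p`. By induction every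
iterated wreath product of cyclic groups has commutator width at most one, and this passes to
the direct limit because any element of its derived subgroup already lies in the image of the
derived subgroup of some `H_k`. The derived subgroup is nontrivial since `C ≀ C_p` is
nonabelian for nontrivial `C` and `p ≥ 2`.
-/

/-- The cyclic shift action of `C_p = ZMod p` on the direct power `B^p`. -/
def cycShift (B : Type*) [Group B] (p : ℕ) :
    Multiplicative (ZMod p) →* MulAut (ZMod p → B) where
  toFun k := MulEquiv.arrowCongr (Equiv.addRight (Multiplicative.toAdd k)) (MulEquiv.refl B)
  map_one' := by
    ext f i
    simp [MulEquiv.arrowCongr]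
    rfl
  map_mul' a b := by
    ext f i
    simp only [MulEquiv.arrowCongr, Equiv.coe_addRight, MulEquiv.coe_mk, Equiv.coe_fn_mk,
      MulEquiv.refl_apply, toAdd_mul, MulAut.mul_apply]
    congr 1
    simp only [Equiv.addRight_symm, Equiv.coe_addRight]
    abel

/-- The permutational wreath product `B ≀ C_p` with `C_p` acting on `p` points by cyclic shift. -/
abbrev Wr (B : Type*) [Group B] (p : ℕ) : Type _ :=
  (ZMod p → B) ⋊[cycShift B p] Multiplicative (ZMod p)

/-- Functoriality of the wreath product `- ≀ C_p` in the passive group. -/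
def wrMap {B B' : Type*} [Group B] [Group B'] (φ : B →* B') (p : ℕ) :
    Wr B p →* Wr B' p :=
  SemidirectProduct.map (φ.compLeft (ZMod p)) (MonoidHom.id _)
    (by
      intro g
      ext f i
      rfl)

/-- `HHgrp p i n` is the iterated wreath product
`C_{p (i+n)} ≀ ⋯ ≀ C_{p (i+1)} ≀ C_{p i}` (with `C_{p i}` the top active group),
so `HHgrp p 1 (k-1)` is the paper's `H_k = C_{p_k} ≀ ⋯ ≀ C_{p_1}`. -/
def HHgrp (p : ℕ → ℕ) : ℕ → ℕ → GrpCat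
  | i, 0 => GrpCat.of (Multiplicative (ZMod (p i)))
  | i, n + 1 => GrpCat.of (Wr (HHgrp p (i + 1) n) (p i))

/-- The natural injective homomorphism `H_k → H_{k+1}`, `g ↦ g(e, …, e)`: it is the
identity on the already-present wreath factors and at the bottom includes
`C_{p(i+n)}` as the active group of `C_{p(i+n+1)} ≀ C_{p(i+n)}` with trivial states. -/
def HHmap (p : ℕ → ℕ) : (i n : ℕ) → (HHgrp p i n →* HHgrp p i (n + 1))
  | _, 0 => SemidirectProduct.inr
  | i, n + 1 => wrMap (HHmap p (i + 1) n) (p i)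

open scoped commutatorElement

def CommutatorWidthLeOne (G : Type*) [Group G] : Prop :=
  ∀ w ∈ commutator G, ∃ a b : G, w = ⁅a, b⁆

namespace CommutatorWidthLeOne

variable {G : Type*} [Group G]

theorem of_isMulCommutative [IsMulCommutative G] : CommutatorWidthLeOne G := by
  intro w hw
  rw [commutator_eq_bot, Subgroup.mem_bot] at hw
  exact ⟨1, 1, by rw [hw, commutatorElement_one_left]⟩

theorem of_directed {ι : Type*} [Nonempty ι] {H : ι → Type*} [∀ i, Group (H i)]
    (f : ∀ i, H i →* G) (hdir : Directed (· ≤ ·) fun i => (f i).range)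
    (hcover : ∀ y, ∃ i, y ∈ (f i).range) (hH : ∀ i, CommutatorWidthLeOne (H i)) :
    CommutatorWidthLeOne G := by
  have hdir' : Directed (· ≤ ·) fun i => ⁅(f i).range, (f i).range⁆ :=
    Directed.mono_comp (· ≤ ·) (fun _ _ h => Subgroup.commutator_mono h h) hdir
  have hle : commutator G ≤ ⨆ i, ⁅(f i).range, (f i).range⁆ := by
    refine Subgroup.commutator_le.2 fun a _ b _ => ?_
    obtain ⟨i, ha⟩ := hcover a
    obtain ⟨j, hb⟩ := hcover b
    obtain ⟨k, hik, hjk⟩ := hdir i j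
    exact le_iSup (fun i => ⁅(f i).range, (f i).range⁆) k
      (Subgroup.commutator_mem_commutator (hik ha) (hjk hb))
  intro w hw
  obtain ⟨k, hk⟩ := (Subgroup.mem_iSup_of_directed hdir').1 (hle hw)
  rw [MonoidHom.range_eq_map, ← Subgroup.map_commutator] at hk
  obtain ⟨x, hx, rfl⟩ := hk
  obtain ⟨a, b, rfl⟩ := hH k x hx
  exact ⟨f k a, f k b, map_commutatorElement _ _ _⟩

end CommutatorWidthLeOne

theorem commutator_ne_bot_of_injective {G H : Type*} [Group G] [Group H] {f : H →* G}
    (hf : Function.Injective f) (hH : commutator H ≠ ⊥) : commutator G ≠ ⊥ := by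
  intro hG
  refine hH ((Subgroup.map_eq_bot_iff_of_injective _ hf).1 (le_bot_iff.1 ?_))
  calc (commutator H).map f = ⁅f.range, f.range⁆ := by
        rw [commutator_def, Subgroup.map_commutator, ← MonoidHom.range_eq_map]
    _ ≤ commutator G := Subgroup.commutator_mono le_top le_top
    _ = ⊥ := hG

namespace ZMod

variable {n : ℕ} [NeZero n]

theorem val_sub_one_add_one {i : ZMod n} (hi : i ≠ 0) : (i - 1).val + 1 = i.val := by
  have hn : n ≠ 1 := by
    rintro rfl
    exact hi (Subsingleton.elim _ _)
  have hi' : 1 ≤ i.val := Nat.one_le_iff_ne_zero.2 ((val_ne_zero i).2 hi)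
  rw [val_sub (by rwa [val_one'' hn]), val_one'' hn]
  omega

theorem val_neg_one_add_one : (-1 : ZMod n).val + 1 = n := by
  obtain ⟨m, rfl⟩ := Nat.exists_eq_succ_of_ne_zero (NeZero.ne n)
  rw [val_neg_one]

theorem prod_range_natCast {M : Type*} [CommMonoid M] (g : ZMod n → M) :
    ∏ j ∈ Finset.range n, g j = ∏ i, g i :=
  Finset.prod_nbij' (fun j => (j : ZMod n)) val (by simp) (by simp [val_lt])
    (fun _ hj => val_cast_of_lt (Finset.mem_range.1 hj)) (fun i _ => natCast_zmod_val i)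
    (fun _ _ => rfl)

end ZMod

section PrefixProd

variable {B : Type*} [Group B]

def revPrefixProd (f : ℕ → B) : ℕ → B
  | 0 => 1
  | r + 1 => f r * revPrefixProd f r

theorem Abelianization.of_revPrefixProd (f : ℕ → B) (r : ℕ) :
    of (revPrefixProd f r) = ∏ j ∈ Finset.range r, of (f j) := by
  induction r with
  | zero => simp [revPrefixProd]
  | succ r ih => rw [revPrefixProd, map_mul, ih, Finset.prod_range_succ, mul_comm]

end PrefixProd

section Wreath

variable {B : Type*} [Group B] {p : ℕ}

theorem cycShift_apply (t : Multiplicative (ZMod p)) (f : ZMod p → B) (i : ZMod p) :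
    cycShift B p t f i = f (i - Multiplicative.toAdd t) := by
  simp [cycShift, MulEquiv.arrowCongr, sub_eq_add_neg]

theorem Wr.commutator_inl_mk (a h : ZMod p → B) (t : Multiplicative (ZMod p)) :
    ⁅(SemidirectProduct.inl a : Wr B p), (⟨h, t⟩ : Wr B p)⁆ =
      SemidirectProduct.inl fun i => a i * h i * (a (i - Multiplicative.toAdd t))⁻¹ * (h i)⁻¹ := by
  ext i
  · simp [commutatorElement_def, cycShift_apply, mul_assoc]
  · simp [commutatorElement_def]

def Wr.prodBase [NeZero p] : Wr B p →* Abelianization B where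
  toFun w := ∏ i, Abelianization.of (w.left i)
  map_one' := by simp
  map_mul' a b := by
    simp only [SemidirectProduct.mul_left, Pi.mul_apply, cycShift_apply, map_mul,
      Finset.prod_mul_distrib]
    congr 1
    exact Equiv.prod_comp (Equiv.subRight _) fun i => Abelianization.of (b.left i)

theorem Wr.commutatorWidthLeOne [NeZero p] (hB : CommutatorWidthLeOne B) :
    CommutatorWidthLeOne (Wr B p) := by
  rintro ⟨f, t⟩ hx
  obtain rfl : t = 1 := by
    simpa using Abelianization.commutator_subset_ker SemidirectProduct.rightHom hx
  set P := revPrefixProd fun j : ℕ => f j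
  have hP : P p ∈ commutator B := by
    rw [← Abelianization.ker_of, MonoidHom.mem_ker, Abelianization.of_revPrefixProd,
      ZMod.prod_range_natCast fun i => Abelianization.of (f i)]
    simpa [Wr.prodBase] using Abelianization.commutator_subset_ker Wr.prodBase hx
  obtain ⟨s, u, hsu⟩ := hB _ hP
  have hP_succ (i : ZMod p) : P (i.val + 1) = f i * P i.val := by
    simp [P, revPrefixProd]
  refine ⟨SemidirectProduct.inl fun i => P (i.val + 1) * u,
    ⟨Pi.mulSingle 0 s⁻¹, Multiplicative.ofAdd 1⟩, ?_⟩
  rw [Wr.commutator_inl_mk]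
  ext i
  · simp only [SemidirectProduct.left_inl, toAdd_ofAdd]
    rcases eq_or_ne i 0 with rfl | hi
    · have hP_one : P 1 = f 0 := by simp [P, revPrefixProd]
      simp only [ZMod.val_zero, zero_add, zero_sub, Pi.mulSingle_eq_same]
      rw [ZMod.val_neg_one_add_one, hsu, hP_one, commutatorElement_def]
      group
    · simp only [Pi.mulSingle_eq_of_ne hi, mul_one, inv_one]
      rw [ZMod.val_sub_one_add_one hi, hP_succ, mul_assoc (f i), mul_inv_cancel_right]
  · rfl

theorem Wr.commutator_ne_bot [Fact (1 < p)] [Nontrivial B] : commutator (Wr B p) ≠ ⊥ := by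
  obtain ⟨b, hb⟩ := exists_ne (1 : B)
  intro h
  have hmem := Subgroup.commutator_mem_commutator
    (Subgroup.mem_top (SemidirectProduct.inl (Pi.mulSingle 0 b) : Wr B p))
    (Subgroup.mem_top (⟨1, Multiplicative.ofAdd 1⟩ : Wr B p))
  rw [← commutator_def, h, Subgroup.mem_bot, Wr.commutator_inl_mk] at hmem
  exact hb (by simpa using congr_fun (congr_arg SemidirectProduct.left hmem) 0)

end Wreath

theorem HHgrp_commutatorWidthLeOne (p : ℕ → ℕ) (hp : ∀ i, p i ≠ 0) :
    ∀ n i, CommutatorWidthLeOne (HHgrp p i n)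
  | 0, i => CommutatorWidthLeOne.of_isMulCommutative (G := Multiplicative (ZMod (p i)))
  | n + 1, i =>
    haveI := NeZero.mk (hp i)
    Wr.commutatorWidthLeOne (HHgrp_commutatorWidthLeOne p hp n (i + 1))

/-- the direct limit of the direct system
`H_1 → H_2 → ⋯` of iterated wreath products `H_k = C_{p_k} ≀ ⋯ ≀ C_{p_1}` of cyclic
groups (orders ≥ 2) under the natural injective homomorphisms `HHmap` has commutator
width 1.  The direct limit is characterized as a group `L` together with compatible
injective homomorphisms `g k : H_{k+1} → L` whose images jointly exhaust `L`;
the conclusion states that every element of `L`'s commutator subgroup is a single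
commutator, and the commutator subgroup is nontrivial. -/
theorem cw_direct_limit_iterWr_eq_one (p : ℕ → ℕ) (hp : ∀ i, 2 ≤ p i)
    (L : Type*) [Group L] (g : ∀ k : ℕ, HHgrp p 1 k →* L)
    (hinj : ∀ k, Function.Injective (g k))
    (hcompat : ∀ (k : ℕ) (x : HHgrp p 1 k), g (k + 1) (HHmap p 1 k x) = g k x)
    (hexhaust : ∀ y : L, ∃ (k : ℕ) (x : HHgrp p 1 k), g k x = y) :
    (∀ w ∈ commutator L, ∃ a b : L, w = ⁅a, b⁆) ∧ commutator L ≠ ⊥ := by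
  have hmono : Monotone fun k => (g k).range := monotone_nat_of_le_succ fun k => by
    rintro _ ⟨x, rfl⟩
    exact ⟨HHmap p 1 k x, hcompat k x⟩
  have hH k : CommutatorWidthLeOne (HHgrp p 1 k) :=
    HHgrp_commutatorWidthLeOne p (fun i => by have := hp i; omega) k 1
  refine ⟨CommutatorWidthLeOne.of_directed g hmono.directed_le hexhaust hH, ?_⟩
  have : Fact (1 < p 1) := ⟨hp 1⟩
  have : Fact (1 < p 2) := ⟨hp 2⟩
  exact commutator_ne_bot_of_injective (hinj 1)
    (Wr.commutator_ne_bot (B := Multiplicative (ZMod (p 2))) (p := p 1))
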